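/- (T_•, ∗̄) is a free associative ℤ-algebra, freely generated by the set of reduced set compositions; equivalently, the products P^{(1)} ∗̄ ⋯ ∗̄ P^{(m)} taken over all finite sequences (P^{(1)},…,P^{(m)}) of reduced set compositions form a ℤ-basis of T_•. -/

import Mathlib

set_option linter.unreachableTactic false
set_option linter.unusedTactic false
set_option maxHeartbeats 1000000


open Finset

/-- Candidate set compositions: lists of finite sets of positive naturals. -/
abbrev SC : Type := List (Finset ℕ)

/-- The underlying (ground) set of a list of blocks. -/
def ground (L : SC) : Finset ℕ := L.foldr (· ∪ ·) ∅

/-- `L` is a set composition of `[n] = {1,…,n}`. -/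
def IsSetComp (n : ℕ) (L : SC) : Prop :=
  (∀ B ∈ L, B.Nonempty) ∧ L.Pairwise Disjoint ∧ ground L = Finset.Icc 1 n

/-- The degree of a set composition (largest element of its ground set). -/
def maxG (L : SC) : ℕ := (ground L).sup id

/-- The 1-based rank of `x` inside the finite set `A` (the position of `x` in the
increasing enumeration of `A`, when `x ∈ A`); this is the order preserving
relabelling `A → [|A|]`. -/
def rankIn (A : Finset ℕ) (x : ℕ) : ℕ := (A.filter (· ≤ x)).card

/-- `P|_A` : intersect the blocks with `A`, delete the empty intersections, and
relabel along the order preserving bijection `A → [|A|]`. -/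
def restrictSC (A : Finset ℕ) (L : SC) : SC :=
  (L.map fun B => (B ∩ A).image (rankIn A)).filter fun B => decide B.Nonempty

/-- Shift all entries of all blocks by `p`. -/
def shiftSC (p : ℕ) (L : SC) : SC := L.map (Finset.image (· + p))

/-- The restricted product `∗̄` on set compositions:
`P ∗̄ Q = (P₁,…,P_k, p+Q₁,…,p+Q_l)` for `P ∈ Comp_p`. -/
def barMul (P Q : SC) : SC := P ++ shiftSC (maxG P) Q

/-- The order-preserving relabelling map `S → T` (`is_{S,T}`), for finite sets
of equal cardinality. -/
def relabelFun (S T : Finset ℕ) (x : ℕ) : ℕ := (T.sort (· ≤ ·)).getD (rankIn S x - 1) 0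

/-- Relabel a set composition of `S` along the order-preserving bijection `S → T`. -/
def relabelSC (S T : Finset ℕ) (L : SC) : SC := L.map (Finset.image (relabelFun S T))

variable (R : Type) [CommRing R]

/-- The free module with basis indexed by lists of blocks; the twisted descent
algebra `T_•` is its submodule spanned by the set compositions. -/
abbrev FM := SC →₀ R

/-- `T_•` as a submodule: the span of the set compositions. -/
noncomputable def Tspan : Submodule R (FM R) :=
  Submodule.span R {f : FM R | ∃ n P, IsSetComp n P ∧ f = Finsupp.single P 1}

/-- The restricted product `∗̄` as a bilinear map. -/
noncomputable def barL : FM R →ₗ[R] FM R →ₗ[R] FM R :=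
  Finsupp.lift _ R SC fun P => Finsupp.lift _ R SC fun Q => Finsupp.single (barMul P Q) 1

/-- The symmetrized product `∗̂` on basis elements:
`P ∗̂ Q = Σ is_{[p],A}(P) ∗ is_{[q],B}(Q)` over all `A ⊔ B = [p+q]`, `|A| = p`. -/
noncomputable def hatB (P Q : SC) : FM R :=
  ∑ A ∈ (Finset.Icc 1 (maxG P + maxG Q)).powerset.filter (fun A => A.card = maxG P),
    Finsupp.single
      (relabelSC (Finset.Icc 1 (maxG P)) A P ++
        relabelSC (Finset.Icc 1 (maxG Q)) ((Finset.Icc 1 (maxG P + maxG Q)) \ A) Q) 1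

/-- The symmetrized product `∗̂` as a bilinear map. -/
noncomputable def hatL : FM R →ₗ[R] FM R →ₗ[R] FM R :=
  Finsupp.lift _ R SC fun P => Finsupp.lift _ R SC fun Q => hatB R P Q

/-- `T_• ⊗ T_•`, realized as the free module on pairs of basis elements. -/
abbrev FM2 := (SC × SC) →₀ R

/-- `T_• ⊗ T_• ⊗ T_•`, realized as the free module on triples of basis elements. -/
abbrev FM3 := (SC × SC × SC) →₀ R

/-- The restricted coproduct `δ̄ (P) = Σ_{p=0}^n P|_{[p]} ⊗ P|_{{p+1,…,n}}`. -/
noncomputable def dBarL : FM R →ₗ[R] FM2 R :=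
  Finsupp.lift _ R SC fun P =>
    ∑ p ∈ Finset.range (maxG P + 1),
      Finsupp.single
        (restrictSC (Finset.Icc 1 p) P, restrictSC (Finset.Icc (p+1) (maxG P)) P) 1

/-- The cosymmetrized coproduct `δ̂ (P) = Σ_{A ⊔ B = [n]} P|_A ⊗ P|_B`. -/
noncomputable def dHatL : FM R →ₗ[R] FM2 R :=
  Finsupp.lift _ R SC fun P =>
    ∑ A ∈ (Finset.Icc 1 (maxG P)).powerset,
      Finsupp.single (restrictSC A P, restrictSC ((Finset.Icc 1 (maxG P)) \ A) P) 1

/-- Apply a coproduct to the first tensor factor:  `d ⊗ id : T⊗T → T⊗T⊗T`. -/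
noncomputable def applyFst (d : FM R →ₗ[R] FM2 R) : FM2 R →ₗ[R] FM3 R :=
  Finsupp.lift _ R (SC × SC) fun PQ =>
    Finsupp.mapDomain (fun RS : SC × SC => (RS.1, RS.2, PQ.2)) (d (Finsupp.single PQ.1 1))

/-- Apply a coproduct to the second tensor factor:  `id ⊗ d : T⊗T → T⊗T⊗T`. -/
noncomputable def applySnd (d : FM R →ₗ[R] FM2 R) : FM2 R →ₗ[R] FM3 R :=
  Finsupp.lift _ R (SC × SC) fun PQ =>
    Finsupp.mapDomain (fun RS : SC × SC => (PQ.1, RS.1, RS.2)) (d (Finsupp.single PQ.2 1))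

/-- `ε ⊗ id : T⊗T → T`, where `ε` is the projection onto `T_0 ≅ R`
(the coefficient of the empty set composition). -/
noncomputable def epsFst : FM2 R →ₗ[R] FM R :=
  Finsupp.lift _ R (SC × SC) fun PQ =>
    if PQ.1 = ([] : SC) then Finsupp.single PQ.2 1 else 0

/-- `id ⊗ ε : T⊗T → T`. -/
noncomputable def epsSnd : FM2 R →ₗ[R] FM R :=
  Finsupp.lift _ R (SC × SC) fun PQ =>
    if PQ.2 = ([] : SC) then Finsupp.single PQ.1 1 else 0

/-- The twist map `x ⊗ y ↦ y ⊗ x` on `T_• ⊗ T_•`. -/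
noncomputable def twistL : FM2 R →ₗ[R] FM2 R :=
  Finsupp.lift _ R (SC × SC) fun PQ => Finsupp.single (PQ.2, PQ.1) 1

/-- The counit: projection onto the degree-0 component `T_0 ≅ R`. -/
noncomputable def counitL : FM R →ₗ[R] R :=
  Finsupp.lift _ R SC fun P => if P = ([] : SC) then 1 else 0

/-- A set composition `(P₁,…,P_k)` of `[n]` is reduced if it is non-trivial and
there is no pair `(a, m)` with `1 ≤ a < k` and `m < n` such that
`P₁ ∪ ⋯ ∪ P_a = [m]`. -/
def Reduced (n : ℕ) (P : SC) : Prop :=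
  IsSetComp n P ∧ 0 < n ∧
    ∀ a m, 0 < a → a < P.length → m < n → ground (P.take a) ≠ Finset.Icc 1 m

/-- Finite sequences of reduced set compositions. -/
abbrev RedSeq := {F : List SC // ∀ Q ∈ F, ∃ m, Reduced m Q}

/-!
Cutting a set composition of `[n]` after its shortest nonempty prefix whose blocks cover an
initial segment `[m]` writes it as `P ∗̄ D` with `P` reduced and `D` a set composition of
`[n - m]`; iterating factors every set composition into reduced ones. The factorization is
unique because a reduced composition has no proper nonempty prefix covering an initial
segment, so no reduced composition is a proper prefix of another. Thus the products are
distinct basis vectors of the free module, and they are all the set compositions.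
-/

section SetCompositions

variable {m n : ℕ} {L : SC}

lemma ground_cons (B : Finset ℕ) (L : SC) : ground (B :: L) = B ∪ ground L := rfl

lemma ground_append (L M : SC) : ground (L ++ M) = ground L ∪ ground M := by
  induction L with
  | nil => simp [ground]
  | cons B L ih => simp only [List.cons_append, ground_cons, ih, Finset.union_assoc]

lemma mem_ground {x : ℕ} : x ∈ ground L ↔ ∃ B ∈ L, x ∈ B := by
  induction L with
  | nil => simp [ground]
  | cons B L ih => simp [ground_cons, ih]

lemma ground_map_image (f : ℕ → ℕ) (L : SC) :
    ground (L.map (Finset.image f)) = (ground L).image f := by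
  induction L with
  | nil => simp [ground]
  | cons B L ih => simp [ground_cons, ih, Finset.image_union]

lemma ground_shiftSC (p : ℕ) (L : SC) : ground (shiftSC p L) = (ground L).image (· + p) :=
  ground_map_image _ L

lemma shiftSC_injective (p : ℕ) : Function.Injective (shiftSC p) :=
  List.map_injective_iff.mpr (Finset.image_injective (add_left_injective p))

lemma ground_take_union_ground_drop (L : SC) (a : ℕ) :
    ground (L.take a) ∪ ground (L.drop a) = ground L := by
  rw [← ground_append, List.take_append_drop]

lemma disjoint_ground_take_ground_drop (h : L.Pairwise Disjoint) (a : ℕ) :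
    Disjoint (ground (L.take a)) (ground (L.drop a)) := by
  rw [← List.take_append_drop a L, List.pairwise_append] at h
  refine Finset.disjoint_left.mpr fun x hxT hxD => ?_
  obtain ⟨B, hB, hxB⟩ := mem_ground.mp hxT
  obtain ⟨C, hC, hxC⟩ := mem_ground.mp hxD
  exact Finset.disjoint_left.mp (h.2.2 B hB C hC) hxB hxC

lemma IsSetComp.maxG_eq (h : IsSetComp n L) : maxG L = n := by
  rw [maxG, h.2.2]
  rcases Nat.eq_zero_or_pos n with rfl | hn
  · simp
  · exact le_antisymm (Finset.sup_le fun x hx => (Finset.mem_Icc.mp hx).2)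
      (Finset.le_sup (f := id) (Finset.mem_Icc.mpr ⟨hn, le_rfl⟩))

lemma IsSetComp.eq_nil_iff (h : IsSetComp n L) : L = [] ↔ n = 0 := by
  constructor
  · rintro rfl
    simpa [ground] using h.2.2.symm
  · rintro rfl
    refine List.eq_nil_iff_forall_not_mem.mpr fun B hB => ?_
    obtain ⟨x, hx⟩ := h.1 B hB
    have hx' : x ∈ ground L := mem_ground.mpr ⟨B, hB, hx⟩
    simp [h.2.2] at hx'

lemma IsSetComp.take_of_ground_eq {a : ℕ} (h : IsSetComp n L)
    (hg : ground (L.take a) = Finset.Icc 1 m) : IsSetComp m (L.take a) :=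
  ⟨fun B hB => h.1 B (List.mem_of_mem_take hB), h.2.1.sublist (List.take_sublist a L), hg⟩

lemma IsSetComp.ground_take_ssubset {a : ℕ} (h : IsSetComp n L) (ha : a < L.length) :
    ground (L.take a) ⊂ Finset.Icc 1 n := by
  obtain ⟨B, hB⟩ := List.exists_mem_of_ne_nil (L.drop a) (by simpa using ha)
  obtain ⟨x, hx⟩ := h.1 B (List.mem_of_mem_drop hB)
  have hxd : x ∈ ground (L.drop a) := mem_ground.mpr ⟨B, hB, hx⟩
  rw [← h.2.2, ← ground_take_union_ground_drop L a, Finset.ssubset_iff_subset_ne]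
  refine ⟨Finset.subset_union_left, fun heq => ?_⟩
  exact Finset.disjoint_left.mp (disjoint_ground_take_ground_drop h.2.1 a)
    (heq ▸ Finset.mem_union_right _ hxd) hxd

lemma IsSetComp.barMul {p q : ℕ} {P Q : SC} (hP : IsSetComp p P) (hQ : IsSetComp q Q) :
    IsSetComp (p + q) (barMul P Q) := by
  rw [_root_.barMul, hP.maxG_eq]
  obtain ⟨hP1, hP2, hP3⟩ := hP
  obtain ⟨hQ1, hQ2, hQ3⟩ := hQ
  refine ⟨?_, List.pairwise_append.mpr ⟨hP2, ?_, ?_⟩, ?_⟩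
  · intro B hB
    rcases List.mem_append.mp hB with h | h
    · exact hP1 B h
    · obtain ⟨C, hC, rfl⟩ := List.mem_map.mp h
      exact (hQ1 C hC).image _
  · exact List.pairwise_map.mpr <| hQ2.imp (Finset.disjoint_image (add_left_injective p)).mpr
  · intro B hB C hC
    refine Finset.disjoint_left.mpr fun x hxB hxC => ?_
    have hx : x ∈ ground P := mem_ground.mpr ⟨B, hB, hxB⟩
    have hx' : x ∈ ground (shiftSC p Q) := mem_ground.mpr ⟨C, hC, hxC⟩
    rw [hP3, Finset.mem_Icc] at hx
    rw [ground_shiftSC, hQ3] at hx'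
    obtain ⟨y, hy, rfl⟩ := Finset.mem_image.mp hx'
    rw [Finset.mem_Icc] at hy
    omega
  · ext x
    simp only [ground_append, hP3, ground_shiftSC, hQ3, Finset.mem_union, Finset.mem_image,
      Finset.mem_Icc]
    constructor
    · rintro (h | ⟨y, hy, rfl⟩) <;> omega
    · intro hx
      rcases le_or_gt x p with h | h
      · left; omega
      · right; exact ⟨x - p, by omega, by omega⟩

lemma IsSetComp.exists_eq_append_shiftSC {a : ℕ} (h : IsSetComp n L)
    (hg : ground (L.take a) = Finset.Icc 1 m) :
    ∃ D, IsSetComp (n - m) D ∧ L = L.take a ++ shiftSC m D := by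
  have hdrop : ∀ x, x ∈ ground (L.drop a) ↔ m < x ∧ x ≤ n := by
    intro x
    have hxL : x ∈ ground L ↔ x ∈ ground (L.take a) ∨ x ∈ ground (L.drop a) := by
      rw [← Finset.mem_union, ground_take_union_ground_drop]
    rw [h.2.2, hg, Finset.mem_Icc, Finset.mem_Icc] at hxL
    have hxm : x ∈ ground (L.drop a) → x ∉ ground (L.take a) :=
      fun hx => Finset.disjoint_right.mp (disjoint_ground_take_ground_drop h.2.1 a) hx
    rw [hg, Finset.mem_Icc] at hxm
    constructor
    · intro hx; have := hxm hx; have := hxL.mpr (Or.inr hx); omega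
    · intro hx; exact (hxL.mp (by omega)).resolve_left (by omega)
  set D := (L.drop a).map (Finset.image (· - m))
  have hshift : shiftSC m D = L.drop a := by
    rw [shiftSC, List.map_map]
    refine (List.map_congr_left fun B hB => ?_).trans (List.map_id _)
    rw [Function.comp_apply, Finset.image_image]
    refine (Finset.image_congr fun x hx => ?_).trans (Finset.image_id)
    have := (hdrop x).mp (mem_ground.mpr ⟨B, hB, hx⟩)
    simp only [Function.comp_apply, id]
    omega
  refine ⟨D, ⟨?_, ?_, ?_⟩, by rw [hshift, List.take_append_drop]⟩
  · intro B hB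
    obtain ⟨C, hC, rfl⟩ := List.mem_map.mp hB
    exact (h.1 C (List.mem_of_mem_drop hC)).image _
  · have hpw : (shiftSC m D).Pairwise Disjoint := hshift ▸ h.2.1.sublist (List.drop_sublist a L)
    exact (List.pairwise_map.mp hpw).imp (Finset.disjoint_image (add_left_injective m)).mp
  · ext y
    rw [← (add_left_injective m).mem_finset_image, ← ground_shiftSC, hshift, hdrop,
      Finset.mem_Icc]
    omega

lemma exists_isSetComp_foldr_barMul {F : List SC} (hF : ∀ P ∈ F, ∃ m, IsSetComp m P) :
    ∃ n, IsSetComp n (F.foldr barMul []) := by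
  induction F with
  | nil => exact ⟨0, by simp [IsSetComp, ground]⟩
  | cons P F ih =>
    obtain ⟨p, hp⟩ := hF P List.mem_cons_self
    obtain ⟨n, hn⟩ := ih fun Q hQ => hF Q (List.mem_cons_of_mem _ hQ)
    exact ⟨p + n, hp.barMul hn⟩

end SetCompositions

section Reduced

variable {m n : ℕ} {P Q L : SC}

lemma Reduced.ne_nil (h : Reduced n P) : P ≠ [] := fun hP => h.2.1.ne' (h.1.eq_nil_iff.mp hP)

lemma Reduced.ground_take_ne {a : ℕ} (h : Reduced n P) (ha₀ : 0 < a) (ha : a < P.length) :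
    ground (P.take a) ≠ Finset.Icc 1 m := by
  intro hg
  have hssub := h.1.ground_take_ssubset ha
  rw [hg] at hssub
  have hmn : m < n := by
    by_contra! hnm
    exact (Finset.ssubset_def.mp hssub).2 (Finset.Icc_subset_Icc_right hnm)
  exact h.2.2 a m ha₀ ha hmn hg

lemma Reduced.eq_of_append_eq_append {X Y : SC} (hP : Reduced m P) (hQ : Reduced n Q)
    (h : P ++ X = Q ++ Y) : P = Q := by
  wlog hlen : P.length ≤ Q.length generalizing P Q X Y m n
  · exact (this hQ hP h.symm (le_of_not_ge hlen)).symm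
  have hPQ : Q.take P.length = P := by
    simpa [List.take_append_of_le_length hlen] using (congrArg (List.take P.length) h).symm
  rcases hlen.eq_or_lt with heq | hlt
  · rw [← hPQ, heq, List.take_length]
  · have hg : ground (Q.take P.length) = Finset.Icc 1 m := by rw [hPQ]; exact hP.1.2.2
    exact (hQ.ground_take_ne (List.length_pos_iff.mpr hP.ne_nil) hlt hg).elim

lemma foldr_barMul_injective {F G : List SC} (hF : ∀ P ∈ F, ∃ m, Reduced m P)
    (hG : ∀ Q ∈ G, ∃ m, Reduced m Q) (h : F.foldr barMul [] = G.foldr barMul []) : F = G := by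
  induction F generalizing G with
  | nil =>
    cases G with
    | nil => rfl
    | cons Q G =>
      obtain ⟨q, hq⟩ := hG Q List.mem_cons_self
      exact absurd (List.append_eq_nil_iff.mp h.symm).1 hq.ne_nil
  | cons P F ih =>
    obtain ⟨p, hp⟩ := hF P List.mem_cons_self
    cases G with
    | nil => exact absurd (List.append_eq_nil_iff.mp h).1 hp.ne_nil
    | cons Q G =>
      obtain ⟨q, hq⟩ := hG Q List.mem_cons_self
      obtain rfl : P = Q := hp.eq_of_append_eq_append hq h
      have htail := shiftSC_injective _ (List.append_cancel_left h)
      rw [ih (fun A hA => hF A (List.mem_cons_of_mem _ hA))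
        (fun A hA => hG A (List.mem_cons_of_mem _ hA)) htail]

lemma IsSetComp.exists_reduced_prefix (h : IsSetComp n L) (hL : L ≠ []) :
    ∃ m P D, Reduced m P ∧ IsSetComp (n - m) D ∧ L = P ++ shiftSC m D := by
  classical
  have hex : ∃ a, 0 < a ∧ ∃ m, ground (L.take a) = Finset.Icc 1 m :=
    ⟨L.length, List.length_pos_iff.mpr hL, n, by rw [List.take_length]; exact h.2.2⟩
  obtain ⟨ha₀, m, hg⟩ := Nat.find_spec hex
  have hP := h.take_of_ground_eq hg
  have hPne : L.take (Nat.find hex) ≠ [] := by simp [hL, ha₀.ne']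
  obtain ⟨D, hD, hLD⟩ := h.exists_eq_append_shiftSC hg
  refine ⟨m, _, D, ⟨hP, Nat.pos_of_ne_zero (mt hP.eq_nil_iff.mpr hPne), ?_⟩, hD, hLD⟩
  intro a m' ha hlt _ hg'
  rw [List.length_take] at hlt
  rw [List.take_take, min_eq_left (by omega)] at hg'
  exact Nat.find_min hex (by omega) ⟨ha, m', hg'⟩

end Reduced

lemma exists_reduced_foldr_barMul_eq {n : ℕ} {L : SC} (h : IsSetComp n L) :
    ∃ F : List SC, (∀ P ∈ F, ∃ m, Reduced m P) ∧ F.foldr barMul [] = L := by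
  rcases eq_or_ne L [] with rfl | hL
  · exact ⟨[], by simp, rfl⟩
  obtain ⟨m, P, D, hP, hD, rfl⟩ := h.exists_reduced_prefix hL
  have : D.length < (P ++ shiftSC m D).length := by
    simp [shiftSC, List.length_pos_iff.mpr hP.ne_nil]
  obtain ⟨F, hF, hFD⟩ := exists_reduced_foldr_barMul_eq hD
  refine ⟨P :: F, ?_, ?_⟩
  · rintro Q (_ | ⟨_, hQ⟩)
    exacts [⟨m, hP⟩, hF Q hQ]
  · rw [List.foldr_cons, hFD, barMul, hP.1.maxG_eq]
termination_by L.length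

/-- **Theorem.** `(T_•, ∗̄)` is a free associative ℤ-algebra, freely generated by
the reduced set compositions: the products `P⁽¹⁾ ∗̄ ⋯ ∗̄ P⁽ᵐ⁾` over all finite
sequences of reduced set compositions form a ℤ-basis of `T_•`. -/
theorem bar_free_algebra :
    LinearIndependent ℤ
      (fun F : RedSeq => (Finsupp.single (F.1.foldr barMul []) 1 : FM ℤ)) ∧
    Submodule.span ℤ
      (Set.range fun F : RedSeq => (Finsupp.single (F.1.foldr barMul []) 1 : FM ℤ))
      = Tspan ℤ := by
  have hinj : Function.Injective fun F : RedSeq => F.1.foldr barMul [] :=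
    fun F G h => Subtype.ext (foldr_barMul_injective F.2 G.2 h)
  refine ⟨(Finsupp.linearIndependent_single_one ℤ SC).comp _ hinj, ?_⟩
  rw [Tspan]
  congr 1
  ext f
  constructor
  · rintro ⟨F, rfl⟩
    obtain ⟨n, hn⟩ := exists_isSetComp_foldr_barMul fun P hP => (F.2 P hP).imp fun _ h => h.1
    exact ⟨n, _, hn, rfl⟩
  · rintro ⟨n, P, hP, rfl⟩
    obtain ⟨F, hF, rfl⟩ := exists_reduced_foldr_barMul_eq hP
    exact ⟨⟨F, hF⟩, rfl⟩
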